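/- Let a ∈ ℝ and δ > 0, and let f : ℝ → ℂ be differentiable at every point of [a-δ, a+δ] with derivative f' interval-integrable on [a-δ, a+δ]. Then f(a) = (1/(2δ)) lim_{M→∞} ∑_{n=-M}^{M} e^{iπna/δ} ∫_{a-δ}^{a+δ} f(u) e^{-iπnu/δ} du. (No condition relating f(a-δ) and f(a+δ) is required.) -/

import Mathlib

/-!
The substitution `u = a - δθ/π` turns the partial sum into the symmetric Fourier partial sum at `0`
of `F θ = f (a - δθ/π)` on `[-π, π]`, that is `(2π)⁻¹ ∫ F D_M` with the Dirichlet kernel `D_M`.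
Since `∫ D_M = 2π`, the error is `(2π)⁻¹ ∫ (F θ - F 0) D_M θ`. Write `F θ - F 0 = (e^{iθ} - 1) h θ`:
the quotient `h` is integrable because `F` is differentiable at `0` and `|e^{iθ} - 1| ≥ 2|θ|/π` on
`[-π, π]`, while `(e^{iθ} - 1) D_M θ = e^{i(M+1)θ} - e^{-iMθ}` telescopes. The error is thus a
difference of two Fourier coefficients of `h`, which tend to `0` by the Riemann–Lebesgue lemma.
-/

open MeasureTheory intervalIntegral Complex Filter Topology
open scoped Real

noncomputable def dirichletKernel (M : ℕ) (θ : ℝ) : ℂ :=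
  ∑ n ∈ Finset.Icc (-(M : ℤ)) M, exp (n * (I * θ))

theorem exp_sub_one_mul_sum_exp_int_mul (z : ℂ) (M : ℕ) :
    (exp z - 1) * ∑ n ∈ Finset.Icc (-(M : ℤ)) M, exp (n * z) =
      exp ((M + 1) * z) - exp (-M * z) := by
  induction M with
  | zero => simp
  | succ M ih =>
    have hIcc : Finset.Icc (-((M + 1 : ℕ) : ℤ)) (M + 1 : ℕ) =
        insert (-((M : ℤ) + 1)) (insert ((M : ℤ) + 1) (Finset.Icc (-(M : ℤ)) M)) := by
      ext; simp; omega
    rw [hIcc, Finset.sum_insert (by simp; omega), Finset.sum_insert (by simp), mul_add, mul_add, ih]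
    have hbot : exp z * exp (-((M : ℂ) + 1) * z) = exp (-M * z) := by rw [← exp_add]; ring_nf
    have htop : exp z * exp (((M : ℂ) + 1) * z) = exp (((M : ℂ) + 1 + 1) * z) := by
      rw [← exp_add]; ring_nf
    push_cast
    linear_combination hbot + htop

theorem continuous_dirichletKernel (M : ℕ) : Continuous (dirichletKernel M) := by
  unfold dirichletKernel
  fun_prop

theorem exp_I_mul_sub_one_mul_dirichletKernel (M : ℕ) (θ : ℝ) :
    (exp (I * θ) - 1) * dirichletKernel M θ = exp ((M + 1) * (I * θ)) - exp (-M * (I * θ)) :=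
  exp_sub_one_mul_sum_exp_int_mul _ M

theorem integral_exp_int_mul_I_mul {n : ℤ} (hn : n ≠ 0) :
    ∫ θ in (-π)..π, exp (n * (I * θ)) = 0 := by
  have hc : (n : ℂ) * I ≠ 0 := mul_ne_zero (by exact_mod_cast hn) I_ne_zero
  have hperiod : exp (n * I * π) = exp (n * I * (-π : ℝ)) := by
    rw [← mul_one (exp (n * I * (-π : ℝ))), ← exp_int_mul_two_pi_mul_I n, ← exp_add]
    push_cast; ring_nf
  simp_rw [← mul_assoc]
  rw [integral_exp_mul_complex hc, hperiod, sub_self, zero_div]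

theorem integral_dirichletKernel (M : ℕ) : ∫ θ in (-π)..π, dirichletKernel M θ = 2 * π := by
  unfold dirichletKernel
  rw [integral_finsetSum fun n _ => (by fun_prop : Continuous _).intervalIntegrable _ _]
  rw [Finset.sum_eq_single_of_mem 0 (by simp) fun n _ hn => integral_exp_int_mul_I_mul hn]
  simp only [Int.cast_zero, zero_mul, exp_zero, intervalIntegral.integral_const, sub_neg_eq_add,
    real_smul, ofReal_add, mul_one]
  ring

theorem two_div_pi_mul_abs_le_norm_exp_I_mul_sub_one {θ : ℝ} (hθ : |θ| ≤ π) :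
    2 / π * |θ| ≤ ‖exp (I * θ) - 1‖ := by
  have hsin := Real.mul_abs_le_abs_sin (x := θ / 2) (by rw [abs_div, abs_two]; linarith)
  rw [abs_div, abs_two] at hsin
  rw [norm_exp_I_mul_ofReal_sub_one, norm_mul, Real.norm_eq_abs, Real.norm_eq_abs, abs_two]
  linarith

theorem norm_ofReal_div_exp_I_mul_sub_one_le {θ : ℝ} (hθ : |θ| ≤ π) :
    ‖(θ : ℂ) / (exp (I * θ) - 1)‖ ≤ π / 2 := by
  rcases eq_or_ne θ 0 with rfl | hθ0
  · simp only [ofReal_zero, zero_div, norm_zero]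
    positivity
  have hlow := two_div_pi_mul_abs_le_norm_exp_I_mul_sub_one hθ
  have hpos : 0 < 2 / π * |θ| := by have := Real.pi_pos; positivity
  rw [norm_div, norm_real, Real.norm_eq_abs, div_le_iff₀ (hpos.trans_le hlow)]
  calc |θ| = π / 2 * (2 / π * |θ|) := by field_simp
    _ ≤ π / 2 * ‖exp (I * θ) - 1‖ := by gcongr

theorem exp_I_mul_ne_one {θ : ℝ} (hθ : |θ| ≤ π) (hθ0 : θ ≠ 0) : exp (I * θ) ≠ 1 := by
  have hlow := two_div_pi_mul_abs_le_norm_exp_I_mul_sub_one hθ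
  have hpos : 0 < 2 / π * |θ| := by have := Real.pi_pos; positivity
  intro h
  rw [h, sub_self, norm_zero] at hlow
  linarith

theorem sub_mul_dirichletKernel (F : ℝ → ℂ) {θ : ℝ} (hθ : |θ| ≤ π) (M : ℕ) :
    (F θ - F 0) * dirichletKernel M θ =
      (F θ - F 0) / (exp (I * θ) - 1) * (exp ((M + 1) * (I * θ)) - exp (-M * (I * θ))) := by
  rcases eq_or_ne θ 0 with rfl | hθ0
  · simp
  have hne : exp (I * θ) - 1 ≠ 0 := sub_ne_zero.mpr (exp_I_mul_ne_one hθ hθ0)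
  rw [← exp_I_mul_sub_one_mul_dirichletKernel, ← mul_assoc, div_mul_cancel₀ _ hne]

theorem tendsto_integral_mul_exp_ofReal_mul_I_cocompact (g : ℝ → ℂ) :
    Tendsto (fun ω : ℝ => ∫ θ, g θ * exp (ω * (I * θ))) (cocompact ℝ) (𝓝 0) := by
  have h2π : -(2 * π)⁻¹ ≠ 0 := neg_ne_zero.mpr (inv_ne_zero (by positivity))
  have hscale : Tendsto (fun ω : ℝ => ω * -(2 * π)⁻¹) (cocompact ℝ) (cocompact ℝ) :=
    (Homeomorph.mulRight₀ _ h2π).map_cocompact.le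
  refine ((Real.tendsto_integral_exp_smul_cocompact g).comp hscale).congr fun ω => ?_
  refine integral_congr_ae (ae_of_all _ fun θ => ?_)
  simp only [Circle.smul_def, Real.fourierChar_apply, smul_eq_mul]
  rw [mul_comm]
  congr 2
  push_cast
  field_simp

theorem tendsto_intervalIntegral_mul_exp_ofReal_mul_I_cocompact (g : ℝ → ℂ) (α β : ℝ) :
    Tendsto (fun ω : ℝ => ∫ θ in α..β, g θ * exp (ω * (I * θ))) (cocompact ℝ) (𝓝 0) := by
  have hset : ∀ s : Set ℝ, MeasurableSet s →
      Tendsto (fun ω : ℝ => ∫ θ in s, g θ * exp (ω * (I * θ))) (cocompact ℝ) (𝓝 0) := by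
    intro s hs
    refine (tendsto_integral_mul_exp_ofReal_mul_I_cocompact (s.indicator g)).congr fun ω => ?_
    rw [← MeasureTheory.integral_indicator hs]
    simp_rw [Set.indicator_mul_left]
  have hdiff := (hset (Set.Ioc α β) measurableSet_Ioc).sub (hset (Set.Ioc β α) measurableSet_Ioc)
  rw [sub_zero] at hdiff
  exact hdiff.congr fun ω => rfl

theorem intervalIntegrable_sub_div_exp_I_mul_sub_one {F : ℝ → ℂ}
    (hF : ContinuousOn F (Set.Icc (-π) π)) (hF0 : DifferentiableAt ℝ F 0) :
    IntervalIntegrable (fun θ => (F θ - F 0) / (exp (I * θ) - 1)) volume (-π) π := by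
  have hpi := Real.pi_pos
  have hslope : ContinuousOn (dslope F 0) (Set.Icc (-π) π) :=
    (continuousOn_dslope (Icc_mem_nhds (by linarith) hpi)).mpr ⟨hF, hF0⟩
  have hfactor : ∀ θ : ℝ, (F θ - F 0) / (exp (I * θ) - 1) =
      dslope F 0 θ * ((θ : ℂ) / (exp (I * θ) - 1)) := by
    intro θ
    rcases eq_or_ne θ 0 with rfl | hθ
    · simp
    rw [dslope_of_ne _ hθ, slope_def_module, real_smul, sub_zero, ofReal_inv]
    field_simp
    rw [mul_comm (θ : ℂ) (exp _ - 1), mul_div_mul_right _ _ (ofReal_ne_zero.mpr hθ)]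
  simp_rw [hfactor]
  rw [intervalIntegrable_iff_integrableOn_Icc_of_le (by linarith)]
  have hbound : ∀ᵐ θ : ℝ ∂volume.restrict (Set.Icc (-π) π), ‖(θ : ℂ) / (exp (I * θ) - 1)‖ ≤ π / 2 :=
    (ae_restrict_iff' measurableSet_Icc).mpr
      (ae_of_all _ fun θ hθ => norm_ofReal_div_exp_I_mul_sub_one_le (abs_le.mpr hθ))
  exact hslope.integrableOn_Icc.mul_bdd (by fun_prop : Measurable _).aestronglyMeasurable hbound

theorem tendsto_fourier_partial_sum_of_differentiableAt_zero {F : ℝ → ℂ}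
    (hF : ContinuousOn F (Set.Icc (-π) π)) (hF0 : DifferentiableAt ℝ F 0) :
    Tendsto (fun M : ℕ => ((2 * π)⁻¹ : ℂ) *
        ∑ n ∈ Finset.Icc (-(M : ℤ)) M, ∫ θ in (-π)..π, F θ * exp (n * (I * θ)))
      atTop (𝓝 (F 0)) := by
  have hpi := Real.pi_pos
  set h : ℝ → ℂ := fun θ => (F θ - F 0) / (exp (I * θ) - 1)
  have hFi : IntervalIntegrable F volume (-π) π := hF.intervalIntegrable_of_Icc (by linarith)
  have hh : IntervalIntegrable h volume (-π) π :=
    intervalIntegrable_sub_div_exp_I_mul_sub_one hF hF0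
  have hsum : ∀ M : ℕ, ∑ n ∈ Finset.Icc (-(M : ℤ)) M, ∫ θ in (-π)..π, F θ * exp (n * (I * θ)) =
      F 0 * (2 * π) + ((∫ θ in (-π)..π, h θ * exp (((M + 1 : ℕ) : ℝ) * (I * θ))) -
        ∫ θ in (-π)..π, h θ * exp ((-M : ℝ) * (I * θ))) := by
    intro M
    have hmod : ∀ ω : ℝ, IntervalIntegrable (fun θ => h θ * exp (ω * (I * θ))) volume (-π) π :=
      fun ω => hh.mul_continuousOn (by fun_prop)
    rw [← integral_finsetSum fun n _ => hFi.mul_continuousOn (by fun_prop),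
      ← integral_sub (hmod _) (hmod _),
      ← integral_dirichletKernel M, ← intervalIntegral.integral_const_mul,
      ← intervalIntegral.integral_add
        (((continuous_dirichletKernel M).intervalIntegrable _ _).const_mul (F 0))
        (hmod _ |>.sub (hmod _))]
    refine integral_congr fun θ hθ => ?_
    rw [Set.uIcc_of_le (by linarith)] at hθ
    have hsplit := sub_mul_dirichletKernel F (abs_le.mpr hθ) M
    rw [← Finset.mul_sum, ← dirichletKernel]
    push_cast
    linear_combination hsplit
  have hcocompact : Tendsto (fun M : ℕ => (M : ℝ)) atTop (cocompact ℝ) := by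
    rw [cocompact_eq_atBot_atTop]
    exact tendsto_natCast_atTop_atTop.mono_right le_sup_right
  have hupper := (tendsto_intervalIntegral_mul_exp_ofReal_mul_I_cocompact h (-π) π).comp
    (hcocompact.comp (tendsto_add_atTop_nat 1))
  have hlower := (tendsto_intervalIntegral_mul_exp_ofReal_mul_I_cocompact h (-π) π).comp
    (Tendsto.comp (Homeomorph.neg ℝ).map_cocompact.le hcocompact)
  have hlim := (hupper.sub hlower).const_mul ((2 * π)⁻¹ : ℂ) |>.const_add (F 0)
  simp only [sub_zero, mul_zero, add_zero] at hlim
  refine hlim.congr fun M => ?_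
  simp only [Function.comp_apply, Homeomorph.coe_neg, hsum]
  field_simp

theorem exp_mul_intervalIntegral_eq_intervalIntegral_comp_sub_mul (f : ℝ → ℂ) {δ : ℝ} (hδ : δ ≠ 0)
    (a : ℝ) (n : ℤ) :
    exp (I * π * n * a / δ) * ∫ u in (a - δ)..(a + δ), f u * exp (-(I * π * n * u) / δ) =
      ((δ / π : ℝ) : ℂ) * ∫ θ in (-π)..π, f (a - δ / π * θ) * exp (n * (I * θ)) := by
  have hc : δ / π ≠ 0 := div_ne_zero hδ Real.pi_ne_zero
  have hsubst := integral_comp_sub_mul (a := -π) (b := π)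
    (fun u => f u * exp (n * (I * (π * (a - u) / δ : ℝ)))) hc a
  have hlo : a - δ / π * π = a - δ := by field_simp
  have hhi : a - δ / π * -π = a + δ := by field_simp; ring
  have hθ : ∀ θ : ℝ, π * (a - (a - δ / π * θ)) / δ = θ := fun θ => by field_simp; ring
  simp only [hlo, hhi, hθ] at hsubst
  rw [hsubst, real_smul, ← mul_assoc, ← ofReal_mul, mul_inv_cancel₀ hc, ofReal_one, one_mul,
    ← intervalIntegral.integral_const_mul]
  refine integral_congr fun u _ => ?_
  rw [mul_left_comm, ← exp_add]
  congr 2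
  push_cast
  field_simp
  ring

theorem mapsTo_sub_div_pi_mul_Icc {δ : ℝ} (hδ : 0 ≤ δ) (a : ℝ) :
    Set.MapsTo (fun θ => a - δ / π * θ) (Set.Icc (-π) π) (Set.Icc (a - δ) (a + δ)) := by
  intro θ hθ
  have hscale : 0 ≤ δ / π := div_nonneg hδ Real.pi_pos.le
  have hupper := mul_le_mul_of_nonneg_left hθ.2 hscale
  have hlower := mul_le_mul_of_nonneg_left hθ.1 hscale
  have hδπ : δ / π * π = δ := by field_simp
  constructor <;> simp only [mul_neg, hδπ] at hupper hlower <;> linarith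

theorem fourier_corollary_central_general (a δ : ℝ) (hδ : 0 < δ)
    (f f' : ℝ → ℂ)
    (hdiff : ∀ x ∈ Set.Icc (a - δ) (a + δ), HasDerivAt f (f' x) x) :
    Filter.Tendsto (fun M : ℕ => ((1 / (2 * δ) : ℝ) : ℂ) *
        ∑ n ∈ Finset.Icc (-(M : ℤ)) (M : ℤ),
          Complex.exp (Complex.I * Real.pi * n * a / δ) *
            ∫ u in (a - δ)..(a + δ), f u * Complex.exp (-(Complex.I * Real.pi * n * u) / δ))
      Filter.atTop (nhds (f a)) := by
  have hF : ContinuousOn (fun θ => f (a - δ / π * θ)) (Set.Icc (-π) π) :=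
    ContinuousOn.comp (fun x hx => (hdiff x hx).continuousAt.continuousWithinAt) (by fun_prop)
      (mapsTo_sub_div_pi_mul_Icc hδ.le a)
  have hfa : DifferentiableAt ℝ f (a - δ / π * 0) := by
    rw [mul_zero, sub_zero]
    exact (hdiff a ⟨by linarith, by linarith⟩).differentiableAt
  have hlim := tendsto_fourier_partial_sum_of_differentiableAt_zero hF
    (hfa.comp 0 (by fun_prop))
  rw [mul_zero, sub_zero] at hlim
  have hcoef : ((1 / (2 * δ) : ℝ) : ℂ) * ((δ / π : ℝ) : ℂ) = (2 * (π : ℂ))⁻¹ := by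
    have : (δ : ℂ) ≠ 0 := ofReal_ne_zero.mpr hδ.ne'
    push_cast
    field_simp
  refine hlim.congr fun M => ?_
  simp only [exp_mul_intervalIntegral_eq_intervalIntegral_comp_sub_mul f hδ.ne', ← Finset.mul_sum,
    ← mul_assoc, hcoef]

/-- Corollary III of the paper (local Fourier series centered at `a`): for `f`
differentiable on `[a-δ, a+δ]` with integrable derivative,
`f(a) = (1/(2δ)) lim_{M→∞} ∑_{n=-M}^{M} e^{iπna/δ} ∫_{a-δ}^{a+δ} f(u) e^{-iπnu/δ} du`;
no condition relating `f(a-δ)` and `f(a+δ)` is required. -/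
theorem fourier_corollary_central (a δ : ℝ) (hδ : 0 < δ)
    (f f' : ℝ → ℂ)
    (hdiff : ∀ x ∈ Set.Icc (a - δ) (a + δ), HasDerivAt f (f' x) x)
    (hint : IntervalIntegrable f' volume (a - δ) (a + δ)) :
    Filter.Tendsto (fun M : ℕ => ((1 / (2 * δ) : ℝ) : ℂ) *
        ∑ n ∈ Finset.Icc (-(M : ℤ)) (M : ℤ),
          Complex.exp (Complex.I * Real.pi * n * a / δ) *
            ∫ u in (a - δ)..(a + δ), f u * Complex.exp (-(Complex.I * Real.pi * n * u) / δ))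
      Filter.atTop (nhds (f a)) :=
  fourier_corollary_central_general a δ hδ f f' hdiff
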